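/- arXiv:1708.03378 — 2 statements merged into one kernel-verified Lean document; each statement's English description precedes it below -/
import Mathlib

section
/- Let w : ℂ → ℂ be an entire function with an essential singularity at infinity (i.e., w is not a polynomial). Then the set of points w₀ ∈ ℂ such that the fiber {z ∈ ℂ : w(z) = w₀} is infinite is dense in ℂ. -/
/-!
If `w` omitted a disc `B(a, ε)` on some neighbourhood `{|z| > m}` of infinity, then
`(w(1/ζ) - a)⁻¹` would be bounded near `0`, hence have a removable singularity of some finite
order `n` there, which makes `w` grow like `|z| ^ n`. An entire function of polynomial growth is
a polynomial (Liouville, by induction on the degree via the quotient `(w z - w 0) / z`). So every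
`w '' {|z| > m}` is dense, and it is open by the open mapping theorem. By Baire,
`⋂ₘ w '' {|z| > m}` is dense, and each of its points has an unbounded, hence infinite, fibre.
-/

open Set Filter Topology Bornology Asymptotics Polynomial Function

theorem isBigO_const_pow_cobounded {𝕜 : Type*} [NormedField 𝕜] (c : 𝕜) (n : ℕ) :
    (fun _ => c) =O[cobounded 𝕜] (· ^ n) := by
  refine (isBigO_const_one 𝕜 c _).trans ((isBigO_const_left_iff_pos_le_norm one_ne_zero).2
    ⟨1, one_pos, ?_⟩)
  filter_upwards [eventually_cobounded_le_norm 1] with z hz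
  simpa using one_le_pow₀ hz

theorem Differentiable.exists_polynomial_of_isBigO_pow {f : ℂ → ℂ} (hf : Differentiable ℂ f)
    {n : ℕ} (hO : f =O[cobounded ℂ] (· ^ n)) : ∃ P : ℂ[X], f = fun z => P.eval z := by
  induction n generalizing f with
  | zero =>
    have hb : IsBounded (range f) := by
      rw [hf.continuous.isBounded_range_iff_isBigO, ← Metric.cobounded_eq_cocompact]
      simp only [pow_zero] at hO
      exact hO.trans (isBigO_const_const 1 one_ne_zero _)
    obtain ⟨c, rfl⟩ := hf.exists_eq_const_of_bounded hb
    exact ⟨C c, funext fun _ => eval_C.symm⟩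
  | succ n ih =>
    have hslope : dslope f 0 =O[cobounded ℂ] (· ^ n) := by
      have h := (isBigO_refl (·⁻¹) (cobounded ℂ)).mul (hO.sub (isBigO_const_pow_cobounded (f 0) _))
      refine h.congr' ?_ ?_
      · filter_upwards [eventually_ne_cobounded 0] with z hz
        simp [dslope_of_ne f hz, slope_def_field, div_eq_inv_mul]
      · filter_upwards [eventually_ne_cobounded 0] with z hz
        rw [pow_succ, mul_comm, mul_assoc, mul_inv_cancel₀ hz, mul_one]
    have hdiff : Differentiable ℂ (dslope f 0) := differentiableOn_univ.1 <|
      (Complex.differentiableOn_dslope univ_mem).2 hf.differentiableOn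
    obtain ⟨P, hP⟩ := ih hdiff hslope
    refine ⟨C (f 0) + X * P, funext fun z => ?_⟩
    have := sub_smul_dslope f 0 z
    simp only [sub_zero, smul_eq_mul, hP] at this
    simp only [eval_add, eval_C, eval_mul, eval_X]
    linear_combination -this

theorem Complex.exists_eventuallyEq_pow_mul_of_isBoundedUnder {g : ℂ → ℂ}
    (hd : ∀ᶠ ζ in 𝓝[≠] 0, DifferentiableAt ℂ g ζ)
    (hb : IsBoundedUnder (· ≤ ·) (𝓝[≠] 0) (‖g ·‖)) (hne : ∀ᶠ ζ in 𝓝[≠] 0, g ζ ≠ 0) :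
    ∃ (n : ℕ) (u : ℂ → ℂ), ContinuousAt u 0 ∧ u 0 ≠ 0 ∧ ∀ᶠ ζ in 𝓝[≠] 0, g ζ = ζ ^ n * u ζ := by
  set h := update g 0 (limUnder (𝓝[≠] 0) g)
  have hgh : g =ᶠ[𝓝[≠] 0] h :=
    eventually_nhdsWithin_of_forall fun ζ hζ => (update_of_ne hζ _ _).symm
  have hcont : ContinuousAt h 0 := continuousAt_update_same.2 <|
    tendsto_limUnder_of_differentiable_on_punctured_nhds_of_bounded_under hd <| by
      obtain ⟨C, hC⟩ := hb
      exact ⟨C + ‖g 0‖, eventually_map.2 <|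
        (eventually_map.1 hC).mono fun ζ hζ => norm_sub_le_of_le hζ le_rfl⟩
  have hdiff : ∀ᶠ ζ in 𝓝[≠] 0, DifferentiableAt ℂ h ζ := by
    filter_upwards [hd, self_mem_nhdsWithin] with ζ hζ hζ0
    exact hζ.congr_of_eventuallyEq <|
      (eventually_ne_nhds hζ0).mono fun y hy => update_of_ne hy _ _
  have han : AnalyticAt ℂ h 0 :=
    analyticAt_of_differentiable_on_punctured_nhds_of_continuousAt hdiff hcont
  have hnz : ¬∀ᶠ ζ in 𝓝 0, h ζ = 0 := fun hz =>
    ((hz.filter_mono nhdsWithin_le_nhds).and (hne.and hgh)).exists.elim fun ζ ⟨hhζ, hgζ, hghζ⟩ =>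
      hgζ (hghζ.trans hhζ)
  obtain ⟨n, u, hu, hu0, hhu⟩ := han.exists_eventuallyEq_pow_smul_nonzero_iff.2 hnz
  refine ⟨n, u, hu.continuousAt, hu0, ?_⟩
  filter_upwards [hgh, hhu.filter_mono nhdsWithin_le_nhds] with ζ hghζ hhuζ
  rw [hghζ, hhuζ, sub_zero, smul_eq_mul]

theorem Differentiable.exists_isBigO_pow_of_eventually_le_norm_sub {w : ℂ → ℂ}
    (hw : Differentiable ℂ w) {a : ℂ} {ε : ℝ} (hε : 0 < ε)
    (hsep : ∀ᶠ z in cobounded ℂ, ε ≤ ‖w z - a‖) : ∃ n : ℕ, w =O[cobounded ℂ] (· ^ n) := by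
  have hsep' : ∀ᶠ ζ in 𝓝[≠] 0, ε ≤ ‖w ζ⁻¹ - a‖ := tendsto_inv₀_nhdsNE_zero.eventually hsep
  have hne : ∀ᶠ ζ in 𝓝[≠] 0, w ζ⁻¹ - a ≠ 0 := hsep'.mono fun ζ hζ h0 => by
    rw [h0, norm_zero] at hζ; exact hε.not_ge hζ
  obtain ⟨n, u, hu, hu0, hgu⟩ := Complex.exists_eventuallyEq_pow_mul_of_isBoundedUnder
    (g := fun ζ => (w ζ⁻¹ - a)⁻¹)
    (by
      filter_upwards [hne, self_mem_nhdsWithin] with ζ hζ hζ0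
      exact ((hw _).comp ζ (differentiableAt_inv hζ0) |>.sub_const a).inv hζ)
    ⟨ε⁻¹, eventually_map.2 <| hsep'.mono fun ζ hζ => by
      simpa only [norm_inv] using inv_anti₀ hε hζ⟩
    (hne.mono fun ζ hζ => inv_ne_zero hζ)
  have hv : (fun z => (u z⁻¹)⁻¹) =O[cobounded ℂ] (fun _ => (1 : ℂ)) :=
    ((hu.tendsto.comp tendsto_inv₀_cobounded).inv₀ hu0).isBigO_one ℂ
  have hwa : (fun z => w z - a) =O[cobounded ℂ] (· ^ n) := by
    refine ((isBigO_refl (· ^ n) _).mul hv).congr' ?_ (by simp)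
    filter_upwards [tendsto_inv₀_cobounded'.eventually hgu] with z hz
    simp only [inv_inv] at hz
    rw [← inv_inv (w z - a), hz, mul_inv, inv_pow, inv_inv]
  exact ⟨n, (hwa.add (isBigO_const_pow_cobounded a n)).congr_left fun z => sub_add_cancel _ _⟩

theorem Differentiable.dense_image_of_mem_cobounded {w : ℂ → ℂ} (hw : Differentiable ℂ w)
    (hnp : ¬ ∃ P : ℂ[X], w = fun z => P.eval z) {s : Set ℂ} (hs : s ∈ cobounded ℂ) :
    Dense (w '' s) := by
  refine Metric.dense_iff.2 fun a ε hε => not_not.1 fun hempty => hnp ?_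
  have hsep : ∀ᶠ z in cobounded ℂ, ε ≤ ‖w z - a‖ := by
    filter_upwards [hs] with z hz
    exact not_lt.1 fun hlt => hempty ⟨w z, by rwa [Metric.mem_ball, dist_eq_norm], z, hz, rfl⟩
  obtain ⟨n, hO⟩ := hw.exists_isBigO_pow_of_eventually_le_norm_sub hε hsep
  exact hw.exists_polynomial_of_isBigO_pow hO

/-- If `w` is entire and transcendental (not a polynomial), then the set of values `w₀`
whose fiber `{z | w z = w₀}` is infinite is dense in `ℂ`. -/
theorem stmt1 (w : ℂ → ℂ) (hw : Differentiable ℂ w)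
    (hnp : ¬ ∃ P : Polynomial ℂ, w = fun z => P.eval z) :
    Dense {w₀ : ℂ | {z : ℂ | w z = w₀}.Infinite} := by
  have hopen : IsOpenMap w := by
    refine (Complex.analyticOnNhd_univ_iff_differentiable.2 hw).is_constant_or_isOpenMap
      |>.resolve_left fun ⟨c, hc⟩ => ?_
    exact hnp ⟨C c, funext fun z => by simp [hc]⟩
  have hV : Dense (⋂ m : ℕ, w '' (Metric.closedBall 0 m)ᶜ) :=
    dense_iInter_of_isOpen (fun m => hopen _ Metric.isClosed_closedBall.isOpen_compl)
      fun m => hw.dense_image_of_mem_cobounded hnp (isBounded_def.1 Metric.isBounded_closedBall)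
  refine hV.mono fun w₀ hw₀ hfin => ?_
  obtain ⟨r, hr⟩ := hfin.isBounded.subset_closedBall 0
  obtain ⟨m, hm⟩ := exists_nat_ge r
  obtain ⟨z, hz, rfl⟩ := mem_iInter.1 hw₀ m
  exact hz (Metric.closedBall_subset_closedBall hm (hr rfl))
end

section
/- For w in the open strip Ω = {-T < Im z < T}, the function g_w(z) = Σ_{n∈ℤ} (conj(e^{inw}) / cosh(2nT)) e^{inz} belongs to H² (its coefficients a_n = conj(e^{inw})/cosh(2nT) satisfy Σ |a_n|² cosh(2nT) < ∞), and for every f ∈ H² one has ⟨f, g_w⟩_H = f(w). That is, g_w is the reproducing kernel of H² at w. -/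
open Complex Real

/-! Since `‖a n‖² cosh(2nT) = e^{-2n Im w} / cosh(2nT) ≤ 2 e^{-2|n|(T - |Im w|)}`, the `H²` norm
of `g_w` is dominated by a two-sided geometric series. The reproducing identity holds term by
term: the weight `cosh(2nT)` of the inner product cancels the one in the denominator of `a n`. -/

lemma Real.summable_exp_mul_abs_int {c : ℝ} (hc : c < 0) :
    Summable fun n : ℤ => Real.exp (c * |(n : ℝ)|) := by
  have hnat : Summable fun n : ℕ => Real.exp (c * n) := by
    simpa only [mul_comm] using Real.summable_exp_nat_mul_iff.2 hc
  exact .of_nat_of_neg (by simpa using hnat) (by simpa using hnat)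

lemma Real.summable_exp_mul_div_cosh {y T : ℝ} (hy : |y| < T) :
    Summable fun n : ℤ => Real.exp (2 * n * y) / Real.cosh (2 * n * T) := by
  have hT : 0 ≤ T := (abs_nonneg y).trans hy.le
  refine .of_nonneg_of_le (fun n => by positivity) (fun n => ?_)
    ((Real.summable_exp_mul_abs_int (c := 2 * (|y| - T)) (by linarith)).mul_left 2)
  rw [div_le_iff₀ (Real.cosh_pos _)]
  have hexp : 2 * n * y ≤ 2 * (|y| - T) * |(n : ℝ)| + |2 * n * T| := by
    rw [abs_mul, abs_mul, abs_two, abs_of_nonneg hT]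
    nlinarith [le_abs_self ((n : ℝ) * y), abs_mul (n : ℝ) y]
  calc Real.exp (2 * n * y)
      ≤ Real.exp (2 * (|y| - T) * |(n : ℝ)|) * Real.exp |2 * n * T| := by
        rw [← Real.exp_add]; exact Real.exp_le_exp.2 hexp
    _ ≤ Real.exp (2 * (|y| - T) * |(n : ℝ)|) * (2 * Real.cosh (2 * n * T)) := by
        gcongr
        rw [Real.cosh_eq]
        linarith [Real.exp_abs_le (2 * n * T)]
    _ = 2 * Real.exp (2 * (|y| - T) * |(n : ℝ)|) * Real.cosh (2 * n * T) := by ring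

lemma Complex.norm_exp_I_mul_int_mul (n : ℤ) (w : ℂ) :
    ‖Complex.exp (I * n * w)‖ = Real.exp (-(n * w.im)) := by
  simp [Complex.norm_exp, Complex.mul_re]

lemma Complex.norm_conj_div_ofReal_sq_mul (z : ℂ) {x : ℝ} (hx : 0 < x) :
    ‖starRingEnd ℂ z / x‖ ^ 2 * x = ‖z‖ ^ 2 / x := by
  rw [norm_div, RCLike.norm_conj, norm_real, Real.norm_of_nonneg hx.le]
  field_simp

lemma Complex.conj_conj_div_ofReal_mul (z : ℂ) {x : ℝ} (hx : x ≠ 0) :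
    starRingEnd ℂ (starRingEnd ℂ z / x) * x = z := by
  rw [map_div₀, conj_conj, conj_ofReal, div_mul_cancel₀ _ (ofReal_ne_zero.2 hx)]

theorem stmt7_general (T : ℝ) (w : ℂ) (hw : |w.im| < T)
    (a : ℤ → ℂ)
    (ha : ∀ n : ℤ, a n = starRingEnd ℂ (Complex.exp (Complex.I * n * w)) /
      Real.cosh (2 * n * T)) :
    (Summable fun n : ℤ => ‖a n‖ ^ 2 * Real.cosh (2 * n * T)) ∧
    (∀ c : ℤ → ℂ, Summable (fun n : ℤ => ‖c n‖ ^ 2 * Real.cosh (2 * n * T)) →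
      (∑' n : ℤ, c n * starRingEnd ℂ (a n) * Real.cosh (2 * n * T)) =
        ∑' n : ℤ, c n * Complex.exp (Complex.I * n * w)) := by
  refine ⟨?_, fun c _ => tsum_congr fun n => ?_⟩
  · have hterm : ∀ n : ℤ, ‖a n‖ ^ 2 * Real.cosh (2 * n * T) =
        Real.exp (2 * n * -w.im) / Real.cosh (2 * n * T) := fun n => by
      rw [ha, norm_conj_div_ofReal_sq_mul _ (Real.cosh_pos _), norm_exp_I_mul_int_mul,
        ← Real.exp_nat_mul]
      ring_nf
    simpa only [hterm] using Real.summable_exp_mul_div_cosh (y := -w.im) (by rwa [abs_neg])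
  · rw [ha, mul_assoc, conj_conj_div_ofReal_mul _ (Real.cosh_pos _).ne']

/-- The reproducing kernel of the periodic Hardy space: for `w` in the strip, the
coefficients `a_n = conj(e^{inw})/cosh(2nT)` define an element `g_w` of `H²`, and
`⟨f, g_w⟩_H = Σ c_n conj(a_n) cosh(2nT) = f(w)` for every `f ∈ H²`. -/
theorem stmt7 (T : ℝ) (hT : 0 < T) (w : ℂ) (hw : |w.im| < T)
    (a : ℤ → ℂ)
    (ha : ∀ n : ℤ, a n = starRingEnd ℂ (Complex.exp (Complex.I * n * w)) /
      Real.cosh (2 * n * T)) :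
    (Summable fun n : ℤ => ‖a n‖ ^ 2 * Real.cosh (2 * n * T)) ∧
    (∀ c : ℤ → ℂ, Summable (fun n : ℤ => ‖c n‖ ^ 2 * Real.cosh (2 * n * T)) →
      (∑' n : ℤ, c n * starRingEnd ℂ (a n) * Real.cosh (2 * n * T)) =
        ∑' n : ℤ, c n * Complex.exp (Complex.I * n * w)) :=
  stmt7_general T w hw a ha
end
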